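/- arXiv:2407.17280 — 6 statements merged into one kernel-verified Lean document; each statement's English description precedes it below -/
import Mathlib

section
/- Let g ∈ H with ‖g‖_H ≤ 1, and let ζ > 0. Then there exists a function g_ζ : ℝ → ℝ that is (1/ζ)-Lipschitz, satisfies g_ζ(0) = 0, and satisfies ‖g − g_ζ‖_∞ ≤ ζ, i.e., |g(a) − g_ζ(a)| ≤ ζ for all a ∈ ℝ. -/
open MeasureTheory ProbabilityTheory Real

noncomputable section

/-- `h` is a square-integrable weak-derivative representation of `g` (so `g 0 = 0`). -/
def IsHRep (g h : ℝ → ℝ) : Prop :=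
  Measurable h ∧ MeasureTheory.Integrable (fun t => h t ^ 2) ∧
    ∀ x : ℝ, g x = ∫ t in (0 : ℝ)..x, h t

/-- Membership in the Sobolev space `H`. -/
def MemH (g : ℝ → ℝ) : Prop := ∃ h, IsHRep g h

/-- The Sobolev norm `‖g‖_H = (∫ (g')²)^{1/2}`. -/
def HNorm (g : ℝ → ℝ) : ℝ :=
  sInf {r : ℝ | ∃ h, IsHRep g h ∧ r = Real.sqrt (∫ t : ℝ, h t ^ 2)}

/-- The unit ball of `H`. -/
def HUnitBall : Set (ℝ → ℝ) := {g | MemH g ∧ HNorm g ≤ 1}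

/-- The dot product on `ℝ^d`. -/
def dotp {d : ℕ} (w x : Fin d → ℝ) : ℝ := ∑ a, w a * x a

/-- `N` is a norm on `ℝ^d`. -/
def IsNorm {d : ℕ} (N : (Fin d → ℝ) → ℝ) : Prop :=
  (∀ x, 0 ≤ N x) ∧ (∀ x, N x = 0 ↔ x = 0) ∧ (∀ (t : ℝ) (x), N (t • x) = |t| * N x) ∧
    ∀ x y, N (x + y) ≤ N x + N y

/-- The dual norm `‖x‖_* = sup_{N w ≤ 1} wᵀx`. -/
def dualNorm {d : ℕ} (N : (Fin d → ℝ) → ℝ) (x : Fin d → ℝ) : ℝ :=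
  sSup {s : ℝ | ∃ w, N w ≤ 1 ∧ s = dotp w x}

/-- Standard Gaussian measure on `ℝ^n`. -/
def stdGaussianPi (n : ℕ) : Measure (Fin n → ℝ) :=
  MeasureTheory.Measure.pi fun _ => gaussianReal 0 1

/-- The Gaussian complexity `G_n` of the class
`{x ↦ g(wᵀx) : N w = 1, ‖g‖_H ≤ 1}` under covariate law `μX`. -/
def gaussComplexity (d n : ℕ) (N : (Fin d → ℝ) → ℝ) (μX : Measure (Fin d → ℝ)) : ℝ :=
  ∫ x : Fin n → Fin d → ℝ,
    (∫ ε : Fin n → ℝ,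
      sSup {s : ℝ | ∃ w, N w = 1 ∧ ∃ g ∈ HUnitBall,
        s = (n : ℝ)⁻¹ * ∑ i, ε i * g (dotp w (x i))} ∂(stdGaussianPi n))
    ∂(MeasureTheory.Measure.pi fun _ : Fin n => μX)

/-- `(c, μ, g)` is a valid representation of `f ∈ F_∞`:
`f x = c + ∫ g_w(wᵀx) dμ(w)` with `μ` a probability measure on the `N`-unit sphere,
each `g_w ∈ H`, and all relevant integrals existing. -/
def IsFRep {d : ℕ} (N : (Fin d → ℝ) → ℝ) (f : (Fin d → ℝ) → ℝ) (c : ℝ)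
    (μ : Measure (Fin d → ℝ)) (g : (Fin d → ℝ) → ℝ → ℝ) : Prop :=
  IsProbabilityMeasure μ ∧ (∀ᵐ w ∂μ, N w = 1) ∧ (∀ w, MemH (g w)) ∧
    (∀ x, MeasureTheory.Integrable (fun w => g w (dotp w x)) μ) ∧
    MeasureTheory.Integrable (fun w => HNorm (g w)) μ ∧
    ∀ x, f x = c + ∫ w, g w (dotp w x) ∂μ

/-- Membership in `F_∞`. -/
def MemFInfty {d : ℕ} (N : (Fin d → ℝ) → ℝ) (f : (Fin d → ℝ) → ℝ) : Prop :=
  ∃ c μ g, IsFRep N f c μ g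

/-- `Ω₀(f)`: infimum of `∫ ‖g_w‖_H dμ(w)` over representations of `f`. -/
def Omega0 {d : ℕ} (N : (Fin d → ℝ) → ℝ) (f : (Fin d → ℝ) → ℝ) : ℝ :=
  sInf {r : ℝ | ∃ c μ g, IsFRep N f c μ g ∧ r = ∫ w, HNorm (g w) ∂μ}

/-- `Ω(f) = max(|f(0)|, Ω₀(f))`. -/
def OmegaP {d : ℕ} (N : (Fin d → ℝ) → ℝ) (f : (Fin d → ℝ) → ℝ) : ℝ :=
  max |f 0| (Omega0 N f)

/-- Expected risk. -/
def trueRisk {d : ℕ} (ℓ : ℝ → ℝ → ℝ) (μXY : Measure ((Fin d → ℝ) × ℝ))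
    (f : (Fin d → ℝ) → ℝ) : ℝ := ∫ p, ℓ p.2 (f p.1) ∂μXY

/-- Empirical risk on a sample `ω`. -/
def empRisk {d n : ℕ} (ℓ : ℝ → ℝ → ℝ) (ω : Fin n → (Fin d → ℝ) × ℝ)
    (f : (Fin d → ℝ) → ℝ) : ℝ := (n : ℝ)⁻¹ * ∑ i, ℓ (ω i).2 (f (ω i).1)

/-- `Z` is subgaussian with variance proxy `v` under `μ`. -/
def IsSubG {Ω : Type*} [MeasurableSpace Ω] (μ : Measure Ω) (Z : Ω → ℝ) (v : ℝ) : Prop :=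
  ∀ t : ℝ, 0 < t →
    max (μ {ω | t ≤ Z ω}).toReal (μ {ω | Z ω ≤ -t}).toReal ≤ Real.exp (-t ^ 2 / (2 * v))

/-- The Brownian kernel. -/
def brownianK (a b : ℝ) : ℝ := (|a| + |b| - |a - b|) / 2

/-- Brownian kernel matrix of projected data. -/
def KMat {d n : ℕ} (x : Fin n → Fin d → ℝ) (w : Fin d → ℝ) : Matrix (Fin n) (Fin n) ℝ :=
  Matrix.of fun i i' => brownianK (dotp w (x i)) (dotp w (x i'))


/-! Write `g x = ∫₀ˣ h` with `∫ h² < 4`: the `H`-norm is an infimum over representations,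
and this slack spares us the a.e. uniqueness of `h`. Clamping `h` to `[-1/ζ, 1/ζ]` yields the
derivative of a `(1/ζ)`-Lipschitz function, and since `(|x| - L)₊ ≤ x² / (4L)` (AM-GM), clamping
changes `h` by at most `ζ/4 · ∫ h² < ζ` in `L¹`, which bounds the uniform error. -/

open NNReal

def clamp (L x : ℝ) : ℝ := max (-L) (min x L)

lemma abs_clamp_le {L : ℝ} (hL : 0 ≤ L) (x : ℝ) : |clamp L x| ≤ L :=
  abs_le.2 ⟨le_max_left _ _, max_le (by linarith) (min_le_right _ _)⟩

lemma abs_sub_clamp_le {L : ℝ} (hL : 0 < L) (x : ℝ) : |x - clamp L x| ≤ x ^ 2 / (4 * L) := by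
  rw [le_div_iff₀ (by positivity), clamp]
  rcases le_total x L with hxL | hxL
  · rcases le_total (-L) x with hLx | hLx
    · rw [min_eq_left hxL, max_eq_right hLx, sub_self, abs_zero, zero_mul]
      positivity
    · rw [min_eq_left hxL, max_eq_left hLx, abs_of_nonpos (by linarith)]
      nlinarith [sq_nonneg (x + 2 * L)]
  · rw [min_eq_right hxL, max_eq_right (by linarith), abs_of_nonneg (by linarith)]
    nlinarith [sq_nonneg (x - 2 * L)]

lemma Measurable.clamp {f : ℝ → ℝ} (hf : Measurable f) (L : ℝ) :
    Measurable fun t => clamp L (f t) :=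
  measurable_const.max (hf.min measurable_const)

lemma lipschitzWith_integral_of_abs_le {f : ℝ → ℝ} {L : ℝ≥0} (a : ℝ)
    (hf : ∀ b c, IntervalIntegrable f volume b c) (hbound : ∀ t, |f t| ≤ L) :
    LipschitzWith L fun x => ∫ t in a..x, f t := by
  refine LipschitzWith.of_dist_le_mul fun x y => ?_
  rw [Real.dist_eq, Real.dist_eq, intervalIntegral.integral_interval_sub_left (hf a x) (hf a y),
    ← Real.norm_eq_abs]
  exact intervalIntegral.norm_integral_le_of_norm_le_const fun t _ =>
    (Real.norm_eq_abs _).trans_le (hbound t)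

lemma abs_intervalIntegral_sub_le_integral {f g : ℝ → ℝ} {a b : ℝ}
    (hf : IntervalIntegrable f volume a b) (hg : IntervalIntegrable g volume a b)
    (hfg : Integrable fun t => |f t - g t|) :
    |(∫ t in a..b, f t) - ∫ t in a..b, g t| ≤ ∫ t, |f t - g t| := by
  rw [← intervalIntegral.integral_sub hf hg, ← Real.norm_eq_abs]
  calc ‖∫ t in a..b, (f t - g t)‖ ≤ ∫ t in Set.uIoc a b, ‖f t - g t‖ :=
        intervalIntegral.norm_integral_le_integral_norm_uIoc
    _ ≤ ∫ t, |f t - g t| :=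
        setIntegral_le_integral hfg (ae_of_all _ fun t => abs_nonneg _)

lemma intervalIntegrable_of_integrable_sq {h : ℝ → ℝ} (hm : Measurable h)
    (hi : Integrable fun t => h t ^ 2) (a b : ℝ) : IntervalIntegrable h volume a b := by
  have hL2 : MemLp h 2 := (memLp_two_iff_integrable_sq hm.aestronglyMeasurable).2 hi
  exact ((hL2.locallyIntegrable one_le_two).integrableOn_isCompact
    isCompact_uIcc).intervalIntegrable

lemma intervalIntegrable_of_abs_le {f : ℝ → ℝ} (hf : Measurable f) {L : ℝ}
    (hbound : ∀ t, |f t| ≤ L) (a b : ℝ) : IntervalIntegrable f volume a b :=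
  (intervalIntegrable_const (c := L)).mono_fun hf.aestronglyMeasurable
    (ae_of_all _ fun t => (hbound t).trans (le_abs_self L))

lemma exists_isHRep_sqrt_integral_lt {g : ℝ → ℝ} (hg : MemH g) {r : ℝ} (hr : HNorm g < r) :
    ∃ h, IsHRep g h ∧ √(∫ t, h t ^ 2) < r := by
  obtain ⟨h, hh⟩ := hg
  obtain ⟨_, ⟨h', hh', rfl⟩, hlt⟩ :=
    exists_lt_of_csInf_lt (s := {r | ∃ h, IsHRep g h ∧ r = √(∫ t, h t ^ 2)})
      ⟨_, h, hh, rfl⟩ hr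
  exact ⟨h', hh', hlt⟩

lemma integrable_abs_sub_clamp {h : ℝ → ℝ} (hm : Measurable h)
    (hi : Integrable fun t => h t ^ 2) {L : ℝ} (hL : 0 < L) :
    Integrable fun t => |h t - clamp L (h t)| :=
  (hi.div_const (4 * L)).mono' (hm.sub (hm.clamp L)).abs.aestronglyMeasurable
    (ae_of_all _ fun t => by rw [Real.norm_eq_abs, abs_abs]; exact abs_sub_clamp_le hL (h t))

lemma integral_abs_sub_clamp_le {h : ℝ → ℝ} (hm : Measurable h)
    (hi : Integrable fun t => h t ^ 2) {L : ℝ} (hL : 0 < L) :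
    ∫ t, |h t - clamp L (h t)| ≤ (∫ t, h t ^ 2) / (4 * L) := by
  rw [← integral_div]
  exact integral_mono (integrable_abs_sub_clamp hm hi hL) (hi.div_const _)
    fun t => abs_sub_clamp_le hL (h t)

/-- Lemma (Lipschitz Approximation): any `g ∈ H` with `‖g‖_H ≤ 1` can be approximated
uniformly up to `ζ` by a `(1/ζ)`-Lipschitz function vanishing at `0`. -/
theorem lipschitz_approximation (g : ℝ → ℝ) (hg : MemH g) (hg1 : HNorm g ≤ 1)
    (ζ : ℝ) (hζ : 0 < ζ) :
    ∃ gζ : ℝ → ℝ, LipschitzWith (Real.toNNReal (1 / ζ)) gζ ∧ gζ 0 = 0 ∧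
      ∀ a : ℝ, |g a - gζ a| ≤ ζ := by
  obtain ⟨h, ⟨hm, hi, hg_eq⟩, hlt⟩ :=
    exists_isHRep_sqrt_integral_lt hg (hg1.trans_lt one_lt_two)
  have hsq : ∫ t, h t ^ 2 < 2 ^ 2 := (Real.sqrt_lt' two_pos).1 hlt
  set L := 1 / ζ with hL_def
  have hL : 0 < L := by positivity
  have hclamp_int :=
    intervalIntegrable_of_abs_le (hm.clamp L) fun t => abs_clamp_le hL.le (h t)
  refine ⟨fun x => ∫ t in (0 : ℝ)..x, clamp L (h t), ?_, intervalIntegral.integral_same,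
    fun a => ?_⟩
  · refine lipschitzWith_integral_of_abs_le 0 hclamp_int fun t => ?_
    rw [Real.coe_toNNReal _ hL.le]
    exact abs_clamp_le hL.le _
  calc |g a - ∫ t in (0 : ℝ)..a, clamp L (h t)|
      ≤ ∫ t, |h t - clamp L (h t)| := by
        rw [hg_eq a]
        exact abs_intervalIntegral_sub_le_integral
          (intervalIntegrable_of_integrable_sq hm hi 0 a) (hclamp_int 0 a)
          (integrable_abs_sub_clamp hm hi hL)
    _ ≤ (∫ t, h t ^ 2) / (4 * L) := integral_abs_sub_clamp_le hm hi hL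
    _ ≤ ζ := by
        rw [hL_def, div_le_iff₀ (by positivity)]
        field_simp
        linarith

end
end

section
/- Let f ∈ F_∞ with Ω₀(f) < ∞. Then f is 1/2-Hölder continuous with constant Ω₀(f) with respect to the dual norm: for all x, x' ∈ ℝ^d, |f(x) − f(x')| ≤ Ω₀(f) √(‖x − x'‖*). -/
open MeasureTheory ProbabilityTheory Real

noncomputable section

/-!
A function `g ∈ H` is `1/2`-Hölder with constant `‖g‖_H` by Cauchy–Schwarz:
`|g b - g a| = |∫_a^b g'| ≤ ‖g'‖_{L²} √|b - a|`. For `‖w‖ = 1` one has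
`|wᵀx - wᵀx'| ≤ ‖x - x'‖_*`, so integrating over `μ` bounds `|f x - f x'|` by
`(∫ ‖g_w‖_H dμ) √‖x - x'‖_*` for every representation of `f`, and one passes to the infimum.
The supremum defining `‖·‖_*` is finite because `N`, being positive on the compact sup-norm
sphere, dominates a multiple of the sup norm.
-/

theorem setIntegral_abs_le_sqrt_integral_sq_mul_sqrt {α : Type*} [MeasurableSpace α]
    {μ : Measure α} {h : α → ℝ} (hh : MemLp h 2 μ) {s : Set α} (hs : μ s ≠ ⊤) :
    ∫ t in s, |h t| ∂μ ≤ √(∫ t, h t ^ 2 ∂μ) * √(μ.real s) := by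
  have : Fact (μ s < ⊤) := ⟨hs.lt_top⟩
  have two : ENNReal.ofReal 2 = 2 := ENNReal.ofReal_ofNat 2
  have cauchySchwarz := integral_mul_le_Lp_mul_Lq_of_nonneg (μ := μ.restrict s)
    Real.HolderConjugate.two_two (f := fun t => |h t|) (g := fun _ => 1)
    (.of_forall fun t => abs_nonneg _) (.of_forall fun _ => zero_le_one)
    (two ▸ (hh.restrict s).abs) (two ▸ memLp_const 1)
  simp only [mul_one, one_pow, Real.rpow_two, sq_abs, ← Real.sqrt_eq_rpow,
    integral_const, smul_eq_mul, measureReal_restrict_apply_univ] at cauchySchwarz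
  refine cauchySchwarz.trans (mul_le_mul_of_nonneg_right (Real.sqrt_le_sqrt ?_) (by positivity))
  exact setIntegral_le_integral ((memLp_two_iff_integrable_sq hh.1).mp hh)
    (.of_forall fun t => sq_nonneg _)

theorem abs_intervalIntegral_le_sqrt_integral_sq_mul_sqrt {h : ℝ → ℝ} (hh : MemLp h 2) (a b : ℝ) :
    |∫ t in a..b, h t| ≤ √(∫ t, h t ^ 2) * √|b - a| := by
  have hvol : volume (Set.uIoc a b) ≠ ⊤ := by simp [Real.volume_uIoc]
  calc |∫ t in a..b, h t| ≤ ∫ t in Set.uIoc a b, |h t| :=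
        intervalIntegral.norm_integral_le_integral_norm_uIoc (f := h)
    _ ≤ √(∫ t, h t ^ 2) * √(volume.real (Set.uIoc a b)) :=
        setIntegral_abs_le_sqrt_integral_sq_mul_sqrt hh hvol
    _ = √(∫ t, h t ^ 2) * √|b - a| := by simp [Measure.real, Real.volume_uIoc]

theorem le_csInf_mul {S : Set ℝ} (hS : S.Nonempty) {a b : ℝ} (hb : 0 ≤ b)
    (h : ∀ r ∈ S, a ≤ r * b) : a ≤ sInf S * b := by
  rw [mul_comm, ← smul_eq_mul, ← Real.sInf_smul_of_nonneg hb]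
  refine le_csInf (hS.smul_set) ?_
  rintro _ ⟨r, hr, rfl⟩
  simpa only [smul_eq_mul, mul_comm] using h r hr

theorem dotp_sub {d : ℕ} (w x x' : Fin d → ℝ) : dotp w (x - x') = dotp w x - dotp w x' := by
  simp only [dotp, Pi.sub_apply, mul_sub, Finset.sum_sub_distrib]

theorem dotp_neg_left {d : ℕ} (w x : Fin d → ℝ) : dotp (-w) x = -dotp w x := by
  simp only [dotp, Pi.neg_apply, neg_mul, Finset.sum_neg_distrib]

theorem abs_dotp_le_norm_mul {d : ℕ} (w x : Fin d → ℝ) : |dotp w x| ≤ ‖w‖ * ∑ a, |x a| := by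
  rw [Finset.mul_sum]
  refine (Finset.abs_sum_le_sum_abs _ _).trans (Finset.sum_le_sum fun a _ => ?_)
  rw [abs_mul]
  exact mul_le_mul_of_nonneg_right (norm_le_pi_norm w a) (abs_nonneg _)

namespace IsNorm

variable {d : ℕ} {N : (Fin d → ℝ) → ℝ}

theorem map_zero (hN : IsNorm N) : N 0 = 0 :=
  (hN.2.1 0).mpr rfl

theorem map_neg (hN : IsNorm N) (w : Fin d → ℝ) : N (-w) = N w := by
  simpa using hN.2.2.1 (-1) w

theorem pos (hN : IsNorm N) {w : Fin d → ℝ} (hw : w ≠ 0) : 0 < N w :=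
  (hN.1 w).lt_of_ne' (mt (hN.2.1 w).mp hw)

theorem le_mul_norm (hN : IsNorm N) (w : Fin d → ℝ) :
    N w ≤ (∑ a, N (Pi.single a 1)) * ‖w‖ := by
  classical
  calc N w = N (∑ a, w a • Pi.single a 1) := by rw [← pi_eq_sum_univ' w]
    _ ≤ ∑ a, N (w a • Pi.single a 1) :=
        Finset.le_sum_of_subadditive N hN.map_zero.le hN.2.2.2 _ _
    _ = ∑ a, |w a| * N (Pi.single a 1) := by simp only [hN.2.2.1]
    _ ≤ ∑ a, ‖w‖ * N (Pi.single a 1) :=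
        Finset.sum_le_sum fun a _ => mul_le_mul_of_nonneg_right (norm_le_pi_norm w a) (hN.1 _)
    _ = (∑ a, N (Pi.single a 1)) * ‖w‖ := by rw [← Finset.mul_sum, mul_comm]

theorem continuous (hN : IsNorm N) : Continuous N := by
  refine (LipschitzWith.of_le_add_mul' (∑ a, N (Pi.single a 1)) fun x y => ?_).continuous
  calc N x = N ((x - y) + y) := by rw [sub_add_cancel]
    _ ≤ N (x - y) + N y := hN.2.2.2 _ _
    _ ≤ N y + (∑ a, N (Pi.single a 1)) * dist x y := by
        rw [dist_eq_norm]; linarith [hN.le_mul_norm (x - y)]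

theorem exists_pos_mul_norm_le (hN : IsNorm N) : ∃ c > 0, ∀ w, c * ‖w‖ ≤ N w := by
  have unit_mem : ∀ w : Fin d → ℝ, w ≠ 0 → ‖w‖⁻¹ • w ∈ Metric.sphere 0 1 := fun w hw => by
    simpa using norm_smul_inv_norm (𝕜 := ℝ) hw
  rcases (Metric.sphere (0 : Fin d → ℝ) 1).eq_empty_or_nonempty with hS | hS
  · refine ⟨1, one_pos, fun w => ?_⟩
    obtain rfl : w = 0 := by_contra fun hw => by simpa [hS] using unit_mem w hw
    simp [hN.map_zero]
  obtain ⟨v, hv, hmin⟩ := (isCompact_sphere 0 1).exists_isMinOn hS hN.continuous.continuousOn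
  refine ⟨N v, hN.pos (ne_zero_of_mem_unit_sphere ⟨v, hv⟩), fun w => ?_⟩
  rcases eq_or_ne w 0 with rfl | hw
  · simp [hN.map_zero]
  have hw' : 0 < ‖w‖ := norm_pos_iff.mpr hw
  have := hmin (unit_mem w hw)
  rw [Set.mem_ofPred_eq, hN.2.2.1, abs_of_pos (inv_pos.mpr hw'), le_inv_mul_iff₀ hw'] at this
  linarith

theorem bddAbove_dotp (hN : IsNorm N) (x : Fin d → ℝ) :
    BddAbove {s : ℝ | ∃ w, N w ≤ 1 ∧ s = dotp w x} := by
  obtain ⟨c, hc, hcN⟩ := hN.exists_pos_mul_norm_le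
  refine ⟨c⁻¹ * ∑ a, |x a|, ?_⟩
  rintro _ ⟨w, hw, rfl⟩
  have hwc : ‖w‖ ≤ c⁻¹ := by rw [← mul_one c⁻¹, le_inv_mul_iff₀ hc]; linarith [hcN w]
  exact (le_abs_self _).trans ((abs_dotp_le_norm_mul w x).trans
    (mul_le_mul_of_nonneg_right hwc (Finset.sum_nonneg fun a _ => abs_nonneg _)))

theorem abs_dotp_le_dualNorm (hN : IsNorm N) {w : Fin d → ℝ}
    (hw : N w ≤ 1) (x : Fin d → ℝ) : |dotp w x| ≤ dualNorm N x := by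
  refine abs_le'.mpr ⟨le_csSup (hN.bddAbove_dotp x) ⟨w, hw, rfl⟩, ?_⟩
  exact le_csSup (hN.bddAbove_dotp x) ⟨-w, (hN.map_neg w).trans_le hw, (dotp_neg_left w x).symm⟩

end IsNorm

theorem IsHRep.memLp {g h : ℝ → ℝ} (hgh : IsHRep g h) : MemLp h 2 :=
  (memLp_two_iff_integrable_sq hgh.1.aestronglyMeasurable).mpr hgh.2.1

theorem IsHRep.sub_eq_intervalIntegral {g h : ℝ → ℝ} (hgh : IsHRep g h) (a b : ℝ) :
    g b - g a = ∫ t in a..b, h t := by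
  have hint : ∀ u v : ℝ, IntervalIntegrable h volume u v := fun u v =>
    intervalIntegrable_iff.mpr (((hgh.memLp.locallyIntegrable one_le_two).integrableOn_isCompact
      isCompact_uIcc).mono_set Set.uIoc_subset_uIcc)
  rw [hgh.2.2 a, hgh.2.2 b, intervalIntegral.integral_interval_sub_left (hint 0 b) (hint 0 a)]

theorem hNorm_nonneg (g : ℝ → ℝ) : 0 ≤ HNorm g :=
  Real.sInf_nonneg fun _ ⟨_, _, hr⟩ => hr ▸ Real.sqrt_nonneg _

theorem MemH.abs_sub_le {g : ℝ → ℝ} (hg : MemH g) (a b : ℝ) :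
    |g b - g a| ≤ HNorm g * √|b - a| := by
  obtain ⟨h, hgh⟩ := hg
  refine le_csInf_mul ?_ (Real.sqrt_nonneg _) ?_
  · exact ⟨_, h, hgh, rfl⟩
  · rintro _ ⟨h', hgh', rfl⟩
    rw [hgh'.sub_eq_intervalIntegral]
    exact abs_intervalIntegral_le_sqrt_integral_sq_mul_sqrt hgh'.memLp a b

theorem IsFRep.abs_sub_le {d : ℕ} {N : (Fin d → ℝ) → ℝ} (hN : IsNorm N) {f : (Fin d → ℝ) → ℝ}
    {c : ℝ} {μ : Measure (Fin d → ℝ)} {g : (Fin d → ℝ) → ℝ → ℝ} (hrep : IsFRep N f c μ g)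
    (x x' : Fin d → ℝ) :
    |f x - f x'| ≤ (∫ w, HNorm (g w) ∂μ) * √(dualNorm N (x - x')) := by
  obtain ⟨-, hsphere, hg, hint, hintH, hf⟩ := hrep
  have hdiff : f x - f x' = ∫ w, (g w (dotp w x) - g w (dotp w x')) ∂μ := by
    rw [hf x, hf x', integral_sub (hint x) (hint x'), add_sub_add_left_eq_sub]
  have hbound : ∀ᵐ w ∂μ, ‖g w (dotp w x) - g w (dotp w x')‖ ≤
      HNorm (g w) * √(dualNorm N (x - x')) := by
    filter_upwards [hsphere] with w hw
    calc ‖g w (dotp w x) - g w (dotp w x')‖ ≤ HNorm (g w) * √|dotp w x - dotp w x'| :=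
          (hg w).abs_sub_le _ _
      _ ≤ HNorm (g w) * √(dualNorm N (x - x')) := by
          rw [← dotp_sub]
          gcongr
          · exact hNorm_nonneg _
          · exact hN.abs_dotp_le_dualNorm hw.le _
  rw [hdiff, ← integral_mul_const]
  exact norm_integral_le_of_norm_le (hintH.mul_const _) hbound

/-- Lemma (Hölder continuity of functions in `F_∞`): if `f ∈ F_∞` (with all relevant
integrals existing, so `Ω₀(f) < ∞`), then `|f(x) − f(x')| ≤ Ω₀(f) √(‖x − x'‖_*)`. -/
theorem holder_continuity_of_memFInfty (d : ℕ) (N : (Fin d → ℝ) → ℝ) (hN : IsNorm N)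
    (f : (Fin d → ℝ) → ℝ) (hf : MemFInfty N f) :
    ∀ x x' : Fin d → ℝ,
      |f x - f x'| ≤ Omega0 N f * Real.sqrt (dualNorm N (x - x')) := by
  intro x x'
  obtain ⟨c, μ, g, hrep⟩ := hf
  refine le_csInf_mul ?_ (Real.sqrt_nonneg _) ?_
  · exact ⟨_, c, μ, g, hrep, rfl⟩
  · rintro _ ⟨c', μ', g', hrep', rfl⟩
    exact hrep'.abs_sub_le hN x x'

end
end

section
/- Let n ≥ 1, let K ∈ ℝ^{n×n} be symmetric positive semidefinite, Y ∈ ℝ^n, and λ > 0. Set Π = I_n − (1/n)𝟙𝟙ᵀ, K̃ = ΠKΠ, Ỹ = ΠY, α* = (K̃ + nλ I_n)^{−1} Ỹ and c* = (𝟙ᵀY)/n − (𝟙ᵀKα*)/n. Then (α*, c*) minimizes the function (α, c) ↦ (1/(2n)) ‖Y − Kα − c𝟙‖₂² + (λ/2) αᵀKα over ℝ^n × ℝ, and the minimal value equals (λ/2) Ỹᵀ (K̃ + λ n I_n)^{−1} Ỹ. -/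
open MeasureTheory ProbabilityTheory Real

noncomputable section

/-!
Write `P` for the centering matrix, `μ = nλ` and `A = PKP + μI`. From `A α* = PY` and `P² = P` one
gets `P α* = α*` (so `α*` sums to zero) and `P (Y - K α*) = μ α*`, i.e. the residual at `(α*, c*)`
is exactly `μ α*`. These are the first-order conditions of the convex quadratic objective: expanding
it around `(α*, c*)` the cross terms cancel, leaving
`obj (α, c) = obj (α*, c*) + ‖K δ + (c - c*) 𝟙‖² / (2n) + (λ/2) δᵀ K δ` with `δ = α - α*`.
At the optimum `obj = (λ/2) α*ᵀ (K + μI) α* = (λ/2) α*ᵀ A α* = (λ/2) Ỹᵀ α*`.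
-/

open Matrix Finset

variable {ι : Type*} [Fintype ι]

section Centering

variable [DecidableEq ι]

def centeringMatrix (ι : Type*) [Fintype ι] [DecidableEq ι] : Matrix ι ι ℝ :=
  1 - (Fintype.card ι : ℝ)⁻¹ • vecMulVec 1 1

theorem centeringMatrix_mulVec_apply (v : ι → ℝ) (i : ι) :
    (centeringMatrix ι *ᵥ v) i = v i - (∑ j, v j) / Fintype.card ι := by
  simp [centeringMatrix, mulVec, dotProduct, one_apply, sub_mul, sum_sub_distrib,
    div_eq_inv_mul, mul_sum]

theorem centeringMatrix_transpose : (centeringMatrix ι)ᵀ = centeringMatrix ι := by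
  simp only [centeringMatrix, transpose_sub, transpose_one, transpose_smul, transpose_vecMulVec]

theorem sum_centeringMatrix_mulVec [Nonempty ι] (v : ι → ℝ) :
    ∑ i, (centeringMatrix ι *ᵥ v) i = 0 := by
  have hcard : (Fintype.card ι : ℝ) ≠ 0 := Nat.cast_ne_zero.mpr Fintype.card_ne_zero
  simp only [centeringMatrix_mulVec_apply, sum_sub_distrib, sum_const, card_univ, nsmul_eq_mul]
  field_simp
  ring

theorem isIdempotentElem_centeringMatrix [Nonempty ι] : IsIdempotentElem (centeringMatrix ι) := by
  refine ext_iff_mulVec.mpr fun v => funext fun i => ?_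
  rw [← mulVec_mulVec, centeringMatrix_mulVec_apply, sum_centeringMatrix_mulVec, zero_div,
    sub_zero]

end Centering

namespace IsIdempotentElem

variable {R : Type*} [Field R] [DecidableEq ι] {P K : Matrix ι ι R} {μ : R} {α Y : ι → R}

theorem mulVec_eq_self_of_regularized (hP : IsIdempotentElem P) (hμ : μ ≠ 0)
    (h : (P * K * P + μ • 1) *ᵥ α = P *ᵥ Y) : P *ᵥ α = α ∧ P *ᵥ (Y - K *ᵥ α) = μ • α := by
  have hres : P *ᵥ (Y - K *ᵥ (P *ᵥ α)) = μ • α := by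
    rw [mulVec_sub, ← h, add_mulVec, smul_mulVec, one_mulVec, mulVec_mulVec, mulVec_mulVec,
      add_sub_cancel_left]
  have hfix : P *ᵥ α = α := by
    refine smul_right_injective _ hμ ?_
    simp only [← mulVec_smul, ← hres, mulVec_mulVec, hP.eq]
  exact ⟨hfix, by rwa [hfix] at hres⟩

end IsIdempotentElem

section CenteredRegularized

variable [DecidableEq ι] [Nonempty ι] {K : Matrix ι ι ℝ} {μ : ℝ} {α Y : ι → ℝ}

theorem sum_eq_zero_of_centered_regularized (hμ : μ ≠ 0)
    (h : (centeringMatrix ι * K * centeringMatrix ι + μ • 1) *ᵥ α = centeringMatrix ι *ᵥ Y) :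
    ∑ i, α i = 0 := by
  rw [← (isIdempotentElem_centeringMatrix.mulVec_eq_self_of_regularized hμ h).1]
  exact sum_centeringMatrix_mulVec α

theorem residual_eq_of_centered_regularized (hμ : μ ≠ 0)
    (h : (centeringMatrix ι * K * centeringMatrix ι + μ • 1) *ᵥ α = centeringMatrix ι *ᵥ Y)
    (i : ι) :
    Y i - (K *ᵥ α) i - ((∑ j, Y j) / Fintype.card ι - (∑ j, (K *ᵥ α) j) / Fintype.card ι) =
      μ * α i := by
  have := congrFun (isIdempotentElem_centeringMatrix.mulVec_eq_self_of_regularized hμ h).2 i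
  simp only [centeringMatrix_mulVec_apply, Pi.sub_apply, sum_sub_distrib, Pi.smul_apply,
    smul_eq_mul] at this
  rw [← this]
  ring

end CenteredRegularized

theorem dotProduct_mul_mul_mulVec_of_mulVec_eq_self {P K : Matrix ι ι ℝ} (hP : Pᵀ = P)
    {v : ι → ℝ} (hv : P *ᵥ v = v) : v ⬝ᵥ (P * K * P) *ᵥ v = v ⬝ᵥ K *ᵥ v := by
  rw [← mulVec_mulVec, ← mulVec_mulVec, hv, dotProduct_mulVec, ← hP, vecMul_transpose, hv]

theorem Matrix.IsSymm.dotProduct_mulVec_comm {K : Matrix ι ι ℝ} (hK : K.IsSymm) (u v : ι → ℝ) :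
    u ⬝ᵥ K *ᵥ v = v ⬝ᵥ K *ᵥ u := by
  calc u ⬝ᵥ K *ᵥ v = u ⬝ᵥ Kᵀ *ᵥ v := by rw [hK.eq]
    _ = v ⬝ᵥ K *ᵥ u := by rw [dotProduct_mulVec, vecMul_transpose, dotProduct_comm]

theorem Matrix.PosSemidef.posDef_mul_mul_add_smul_one [DecidableEq ι] {K P : Matrix ι ι ℝ}
    (hK : K.PosSemidef) (hP : Pᵀ = P) {μ : ℝ} (hμ : 0 < μ) : (P * K * P + μ • 1).PosDef := by
  have hPKP : (P * K * P).PosSemidef := by simpa [hP] using hK.mul_mul_conjTranspose_same P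
  exact PosDef.posSemidef_add hPKP (PosDef.one.smul hμ)

theorem Matrix.PosDef.mulVec_inv_mulVec [DecidableEq ι] {A : Matrix ι ι ℝ} (hA : A.PosDef)
    (v : ι → ℝ) : A *ᵥ (A⁻¹ *ᵥ v) = v := by
  rw [mulVec_mulVec, mul_nonsing_inv _ ((isUnit_iff_isUnit_det _).mp hA.isUnit), one_mulVec]

section Objective

variable {m lam : ℝ} {K : Matrix ι ι ℝ} {Y α₀ : ι → ℝ} {c₀ : ℝ}

def ridgeObjective (m lam : ℝ) (K : Matrix ι ι ℝ) (Y : ι → ℝ) (α : ι → ℝ) (c : ℝ) : ℝ :=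
  (2 * m)⁻¹ * ∑ i, (Y i - (K *ᵥ α) i - c) ^ 2 + lam / 2 * (α ⬝ᵥ K *ᵥ α)

theorem ridgeObjective_eq_add (hK : K.IsSymm) (hm : m ≠ 0)
    (hres : ∀ i, Y i - (K *ᵥ α₀) i - c₀ = m * lam * α₀ i) (hsum : ∑ i, α₀ i = 0)
    (α : ι → ℝ) (c : ℝ) :
    ridgeObjective m lam K Y α c = ridgeObjective m lam K Y α₀ c₀ +
      (2 * m)⁻¹ * ∑ i, ((K *ᵥ (α - α₀)) i + (c - c₀)) ^ 2 +
      lam / 2 * ((α - α₀) ⬝ᵥ K *ᵥ (α - α₀)) := by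
  set δ := α - α₀
  have hα : α = α₀ + δ := (add_sub_cancel α₀ α).symm
  have hterm : ∀ i, Y i - (K *ᵥ α) i - c = m * lam * α₀ i - ((K *ᵥ δ) i + (c - c₀)) := by
    intro i
    rw [hα, mulVec_add, Pi.add_apply, ← hres i]
    ring
  have hcross : ∑ i, α₀ i * ((K *ᵥ δ) i + (c - c₀)) = α₀ ⬝ᵥ K *ᵥ δ := by
    simp only [mul_add, sum_add_distrib, ← sum_mul, hsum, zero_mul, add_zero, dotProduct]
  have hsq : ∑ i, (Y i - (K *ᵥ α) i - c) ^ 2 = ∑ i, (Y i - (K *ᵥ α₀) i - c₀) ^ 2 -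
      2 * (m * lam) * (α₀ ⬝ᵥ K *ᵥ δ) + ∑ i, ((K *ᵥ δ) i + (c - c₀)) ^ 2 := by
    simp only [hterm, hres, ← hcross, mul_sum, ← sum_sub_distrib, ← sum_add_distrib]
    exact sum_congr rfl fun i _ => by ring
  have hquad : α ⬝ᵥ K *ᵥ α = α₀ ⬝ᵥ K *ᵥ α₀ + 2 * (α₀ ⬝ᵥ K *ᵥ δ) + δ ⬝ᵥ K *ᵥ δ := by
    rw [hα, mulVec_add, dotProduct_add, add_dotProduct, add_dotProduct,
      hK.dotProduct_mulVec_comm δ α₀]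
    ring
  simp only [ridgeObjective, hsq, hquad]
  field_simp
  ring

theorem ridgeObjective_le (hK : K.PosSemidef) (hm : 0 < m) (hlam : 0 ≤ lam)
    (hres : ∀ i, Y i - (K *ᵥ α₀) i - c₀ = m * lam * α₀ i) (hsum : ∑ i, α₀ i = 0)
    (α : ι → ℝ) (c : ℝ) : ridgeObjective m lam K Y α₀ c₀ ≤ ridgeObjective m lam K Y α c := by
  rw [ridgeObjective_eq_add (isHermitian_iff_isSymm.mp hK.isHermitian) hm.ne' hres hsum α c]
  have hquad : 0 ≤ (α - α₀) ⬝ᵥ K *ᵥ (α - α₀) := by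
    simpa using hK.dotProduct_mulVec_nonneg (α - α₀)
  have hsq : 0 ≤ ∑ i, ((K *ᵥ (α - α₀)) i + (c - c₀)) ^ 2 := sum_nonneg fun i _ => sq_nonneg _
  exact le_add_of_le_of_nonneg (le_add_of_nonneg_right (mul_nonneg (by positivity) hsq))
    (mul_nonneg (by positivity) hquad)

theorem ridgeObjective_eq_of_residual [DecidableEq ι]
    (hres : ∀ i, Y i - (K *ᵥ α₀) i - c₀ = m * lam * α₀ i) :
    ridgeObjective m lam K Y α₀ c₀ = lam / 2 * (α₀ ⬝ᵥ (K + (m * lam) • 1) *ᵥ α₀) := by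
  rw [add_mulVec, smul_mulVec, one_mulVec, dotProduct_add, dotProduct_smul]
  simp only [ridgeObjective, hres, smul_eq_mul, dotProduct, mul_pow, ← mul_sum]
  field_simp
  ring

end Objective

open Matrix in
/-- Lemma (Optimisation for Fixed Particles): closed-form solution and value of the
regularised kernel ridge regression problem with unregularised intercept. -/
theorem kernel_ridge_closed_form (n : ℕ) (hn : 1 ≤ n)
    (K : Matrix (Fin n) (Fin n) ℝ) (hK : K.PosSemidef) (Y : Fin n → ℝ)
    (lam : ℝ) (hlam : 0 < lam) :
    let ones : Fin n → ℝ := fun _ => 1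
    let P : Matrix (Fin n) (Fin n) ℝ := 1 - (n : ℝ)⁻¹ • Matrix.vecMulVec ones ones
    let Kt : Matrix (Fin n) (Fin n) ℝ := P * K * P
    let Yt : Fin n → ℝ := P.mulVec Y
    let αs : Fin n → ℝ := (Kt + ((n : ℝ) * lam) • (1 : Matrix (Fin n) (Fin n) ℝ))⁻¹.mulVec Yt
    let cs : ℝ := (∑ i, Y i) / n - (∑ i, K.mulVec αs i) / n
    let obj : (Fin n → ℝ) → ℝ → ℝ := fun α c =>
      (2 * (n : ℝ))⁻¹ * ∑ i, (Y i - K.mulVec α i - c) ^ 2 + lam / 2 * (α ⬝ᵥ K.mulVec α)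
    (∀ (α : Fin n → ℝ) (c : ℝ), obj αs cs ≤ obj α c) ∧
      obj αs cs =
        lam / 2 *
          (Yt ⬝ᵥ (Kt + (lam * (n : ℝ)) • (1 : Matrix (Fin n) (Fin n) ℝ))⁻¹.mulVec Yt) := by
  intro ones P Kt Yt αs cs obj
  have : Nonempty (Fin n) := ⟨⟨0, hn⟩⟩
  have hn0 : (0 : ℝ) < n := by exact_mod_cast hn
  have hμ : (n : ℝ) * lam ≠ 0 := by positivity
  have hP : P = centeringMatrix (Fin n) := by
    unfold centeringMatrix
    rw [Fintype.card_fin]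
    rfl
  have hPt : Pᵀ = P := hP ▸ centeringMatrix_transpose
  have hsol : (Kt + ((n : ℝ) * lam) • 1) *ᵥ αs = Yt :=
    (hK.posDef_mul_mul_add_smul_one hPt (by positivity)).mulVec_inv_mulVec Yt
  have hsolC : (centeringMatrix (Fin n) * K * centeringMatrix (Fin n) + ((n : ℝ) * lam) • 1) *ᵥ αs
      = centeringMatrix (Fin n) *ᵥ Y := hP ▸ hsol
  have hres : ∀ i, Y i - (K *ᵥ αs) i - cs = n * lam * αs i := by
    simpa using residual_eq_of_centered_regularized hμ hsolC
  have hfix : P *ᵥ αs = αs :=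
    hP ▸ (isIdempotentElem_centeringMatrix.mulVec_eq_self_of_regularized hμ hsolC).1
  refine ⟨ridgeObjective_le hK hn0 hlam.le hres (sum_eq_zero_of_centered_regularized hμ hsolC), ?_⟩
  rw [mul_comm lam (n : ℝ)]
  change ridgeObjective n lam K Y αs cs = lam / 2 * (Yt ⬝ᵥ αs)
  rw [ridgeObjective_eq_of_residual hres, ← hsol, dotProduct_comm _ αs, add_mulVec, add_mulVec,
    dotProduct_add, dotProduct_add, dotProduct_mul_mul_mulVec_of_mulVec_eq_self hPt hfix]

end
end

section
/- Let K_1,…,K_m ∈ ℝ^{n×n} be symmetric positive semidefinite matrices, β_1,…,β_m > 0, and α ∈ ℝ^n. Set z = (1/m) Σ_{j=1}^m β_j K_j α, and for j ∈ [m] let α^{(j)} = β_j α. Then (α^{(1)},…,α^{(m)}) solves the constrained problem: for every (γ^{(1)},…,γ^{(m)}) ∈ (ℝ^n)^m with (1/m) Σ_{j=1}^m K_j γ^{(j)} = z, one has (1/(2m)) Σ_{j=1}^m (α^{(j)})ᵀ K_j α^{(j)} / β_j ≤ (1/(2m)) Σ_{j=1}^m (γ^{(j)})ᵀ K_j γ^{(j)}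 / β_j; equivalently, (1/(2m)) Σ_{j=1}^m β_j αᵀ K_j α ≤ (1/(2m)) Σ_{j=1}^m (γ^{(j)})ᵀ K_j γ^{(j)} / β_j for all such feasible (γ^{(j)})_j. -/
open MeasureTheory ProbabilityTheory Real

noncomputable section

namespace Matrix

variable {ι : Type*} [Fintype ι]

theorem IsHermitian.dotProduct_mulVec_comm_of_real {K : Matrix ι ι ℝ} (hK : K.IsHermitian)
    (x y : ι → ℝ) : x ⬝ᵥ K *ᵥ y = y ⬝ᵥ K *ᵥ x := by
  have hKt : Kᵀ = K := by rwa [IsHermitian, conjTranspose_eq_transpose_of_trivial] at hK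
  rw [← dotProduct_transpose_mulVec, hKt]

/-- Expand `0 ≤ (y - β • x) ⬝ᵥ K *ᵥ (y - β • x)` and divide by `β`. -/
theorem PosSemidef.two_mul_dotProduct_mulVec_le {K : Matrix ι ι ℝ} (hK : K.PosSemidef)
    {β : ℝ} (hβ : 0 < β) (x y : ι → ℝ) :
    2 * (x ⬝ᵥ K *ᵥ y) ≤ β * (x ⬝ᵥ K *ᵥ x) + y ⬝ᵥ K *ᵥ y / β := by
  have hnonneg := hK.dotProduct_mulVec_nonneg (y - β • x)
  simp only [star_trivial, mulVec_sub, mulVec_smul, sub_dotProduct, dotProduct_sub,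
    smul_dotProduct, dotProduct_smul, smul_eq_mul] at hnonneg
  rw [hK.1.dotProduct_mulVec_comm_of_real y x] at hnonneg
  rw [← sub_le_iff_le_add', le_div_iff₀ hβ]
  nlinarith

theorem smul_dotProduct_mulVec_smul_div (K : Matrix ι ι ℝ) {c : ℝ} (hc : c ≠ 0) (x : ι → ℝ) :
    (c • x) ⬝ᵥ K *ᵥ (c • x) / c = c * (x ⬝ᵥ K *ᵥ x) := by
  rw [mulVec_smul, smul_dotProduct, dotProduct_smul, smul_eq_mul, smul_eq_mul]
  field_simp

/-- The constraint, paired with `α`, turns the cross terms of the AM–GM bound into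
`∑ j, β j * (α ⬝ᵥ K j *ᵥ α)`. -/
theorem sum_mul_dotProduct_mulVec_le_of_sum_mulVec_eq {κ : Type*} [Fintype κ]
    {K : κ → Matrix ι ι ℝ} (hK : ∀ j, (K j).PosSemidef) {β : κ → ℝ} (hβ : ∀ j, 0 < β j)
    (α : ι → ℝ) {γ : κ → ι → ℝ} (h : ∑ j, K j *ᵥ γ j = ∑ j, β j • K j *ᵥ α) :
    ∑ j, β j * (α ⬝ᵥ K j *ᵥ α) ≤ ∑ j, γ j ⬝ᵥ K j *ᵥ γ j / β j := by
  have hcross : ∑ j, α ⬝ᵥ K j *ᵥ γ j = ∑ j, β j * (α ⬝ᵥ K j *ᵥ α) := by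
    simpa only [dotProduct_sum, dotProduct_smul, smul_eq_mul] using congrArg (α ⬝ᵥ ·) h
  calc ∑ j, β j * (α ⬝ᵥ K j *ᵥ α)
      = ∑ j, (2 * (α ⬝ᵥ K j *ᵥ γ j) - β j * (α ⬝ᵥ K j *ᵥ α)) := by
        rw [Finset.sum_sub_distrib, ← Finset.mul_sum, hcross]
        ring
    _ ≤ ∑ j, γ j ⬝ᵥ K j *ᵥ γ j / β j := Finset.sum_le_sum fun j _ => by
        linarith [(hK j).two_mul_dotProduct_mulVec_le (hβ j) α (γ j)]

end Matrix

open Matrix in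
/-- Key step of the representer-theorem reformulation: under the linear constraint
`(1/m) Σ_j K_j γ⁽ʲ⁾ = (1/m) Σ_j β_j K_j α`, the choice `γ⁽ʲ⁾ = β_j α` minimises
`(1/(2m)) Σ_j (γ⁽ʲ⁾)ᵀ K_j γ⁽ʲ⁾ / β_j`. -/
theorem representer_constrained_minimum (n m : ℕ) (K : Fin m → Matrix (Fin n) (Fin n) ℝ)
    (hK : ∀ j, (K j).PosSemidef) (β : Fin m → ℝ) (hβ : ∀ j, 0 < β j)
    (α : Fin n → ℝ) (γ : Fin m → Fin n → ℝ)
    (hfeas : (m : ℝ)⁻¹ • ∑ j, (K j).mulVec (γ j) =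
      (m : ℝ)⁻¹ • ∑ j, β j • (K j).mulVec α) :
    (2 * (m : ℝ))⁻¹ * ∑ j, (β j • α) ⬝ᵥ (K j).mulVec (β j • α) / β j ≤
      (2 * (m : ℝ))⁻¹ * ∑ j, γ j ⬝ᵥ (K j).mulVec (γ j) / β j := by
  rcases Nat.eq_zero_or_pos m with rfl | hm
  · simp
  have hsum : ∑ j, K j *ᵥ γ j = ∑ j, β j • K j *ᵥ α :=
    smul_right_injective _ (inv_ne_zero (Nat.cast_ne_zero.mpr hm.ne')) hfeas
  simp only [smul_dotProduct_mulVec_smul_div _ (hβ _).ne']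
  exact mul_le_mul_of_nonneg_left
    (sum_mul_dotProduct_mulVec_le_of_sum_mulVec_eq hK hβ α hsum) (by positivity)

end
end

section
/- Fix x_1,…,x_n ∈ ℝ^d, Y ∈ ℝ^n, λ > 0 and m ≥ 1. For W = (w_1,…,w_m) ∈ (ℝ^d)^m let K(W) = (1/m) Σ_{j=1}^m K^{(w_j)}, Π = I_n − (1/n)𝟙𝟙ᵀ, K̃ = ΠK(W)Π, Ỹ = ΠY, and G(W) = (λ/2) Ỹᵀ (K̃ + λ n I_n)^{−1} Ỹ. Let j ∈ [m] and suppose W is such that w_jᵀ(x_i − x_{i'}) ≠ 0 for all i ≠ i' with x_i ≠ x_{i'}. Then, the other particles being fixed, the map w_j ↦ G(W) is differentiable at w_j with gradient ∂G/∂w_j = (λ/(4m)) Σ_{i,i'=1}^n z_i z_{i'} sign(w_jᵀ(x_i − x_{i'})) (x_i − x_{i'}), where z = (K̃ + nλ I_n)^{−1} Ỹ. -/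
open MeasureTheory ProbabilityTheory Real

noncomputable section

/-!
As a function of `v = w_j`, `K(W) = (K^{(v)} + R)/m` with `R` fixed and positive semidefinite.
Centring kills the rank-one parts `|vᵀx_i|` of the Brownian kernel, leaving
`Π K^{(v)} Π = -½ Π A(v) Π` with `A(v)_{ii'} = |vᵀ(x_i - x_{i'})|`. Under the hypothesis each entry of `A` is either identically
zero or the absolute value of a linear form that does not vanish at `w_j`, so it is
differentiable there. The Brownian kernel is `sign a · sign b · Leb((0,a] ∩ (0,b])`, hence
positive semidefinite, so `M = K̃ + λ n I` is positive definite. Differentiating the inverse gives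
`∂G = -(λ/2) zᵀ (∂M) z`, and since `𝟙ᵀ M = λ n 𝟙ᵀ` forces `𝟙ᵀ z = 0`, `Π z = z` and the
centring drops out of the gradient.
-/

open Matrix
open scoped RealInnerProductSpace

lemma brownianK_eq_sign_mul_volume_inter (a b : ℝ) :
    brownianK a b = Real.sign a * Real.sign b * volume.real (Set.uIoc 0 a ∩ Set.uIoc 0 b) := by
  rcases lt_trichotomy a 0 with ha | ha | ha <;> rcases lt_trichotomy b 0 with hb | hb | hb <;>
    simp [*, brownianK, Set.uIoc, le_of_lt, Real.sign_of_neg,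
      Real.sign_of_pos, abs_of_neg, abs_of_pos, Set.Ioc_inter_Ioc, Real.volume_real_Ioc]
  all_goals rcases le_total a b with h | h <;>
    simp [h, abs_of_nonpos, abs_of_nonneg] <;> linarith

lemma KMat_posSemidef {d n : ℕ} (x : Fin n → Fin d → ℝ) (w : Fin d → ℝ) :
    (KMat x w).PosSemidef := by
  let D : Matrix (Fin n) (Fin n) ℝ := diagonal fun i => Real.sign (dotp w (x i))
  have hK : KMat x w = D * of (fun i i' =>
      volume.real (Set.uIoc 0 (dotp w (x i)) ∩ Set.uIoc 0 (dotp w (x i')))) * Dᴴ := by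
    ext i i'
    simp [D, KMat, brownianK_eq_sign_mul_volume_inter, diagonal_mul, mul_diagonal]
    ring
  rw [hK]
  exact (posSemidef_matrix_measure_inter (fun _ => measurableSet_uIoc)
    fun _ => by simp [Real.volume_uIoc]).mul_mul_conjTranspose_same D

lemma dotp_ofLp {d : ℕ} (v u : EuclideanSpace ℝ (Fin d)) : dotp v.ofLp u.ofLp = ⟪u, v⟫ := by
  simp [dotp, EuclideanSpace.inner_eq_star_dotProduct, dotProduct]

lemma sum_mul_sub_eq_inner {d : ℕ} (u u' v : EuclideanSpace ℝ (Fin d)) :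
    ∑ a, v a * (u a - u' a) = ⟪u - u', v⟫ := by
  simp [← dotp_ofLp, dotp]

def centering (n : ℕ) : Matrix (Fin n) (Fin n) ℝ := 1 - (n : ℝ)⁻¹ • vecMulVec 1 1

namespace centering
variable {n : ℕ}

lemma transpose : (centering n)ᵀ = centering n := by
  rw [centering, transpose_sub, transpose_smul, transpose_vecMulVec, transpose_one]

lemma one_vecMul : 1 ᵥ* centering n = 0 := by
  rcases Nat.eq_zero_or_pos n with rfl | hn
  · exact Subsingleton.elim _ _
  · rw [centering, vecMul_sub, vecMul_one, vecMul_smul, vecMul_vecMulVec, one_dotProduct_one,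
      Fintype.card_fin, smul_smul, inv_mul_cancel₀ (by positivity), one_smul, sub_self]

lemma mulVec_one : centering n *ᵥ 1 = 0 := by
  rw [← transpose, mulVec_transpose, one_vecMul]

lemma mulVec_eq_self {u : Fin n → ℝ} (hu : 1 ⬝ᵥ u = 0) : centering n *ᵥ u = u := by
  rw [centering, sub_mulVec, one_mulVec, smul_mulVec, vecMulVec_mulVec, hu]
  simp

lemma vecMulVec_one_mul (a : Fin n → ℝ) : vecMulVec a 1 * centering n = 0 := by
  rw [vecMulVec_mul, one_vecMul, vecMulVec_zero]

lemma mul_vecMulVec_one (a : Fin n → ℝ) : centering n * vecMulVec 1 a = 0 := by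
  rw [mul_vecMulVec, mulVec_one, zero_vecMulVec]

end centering

def absProjDiffMatrix {ι E : Type*} [NormedAddCommGroup E] [InnerProductSpace ℝ E]
    (x : ι → E) (v : E) : Matrix ι ι ℝ :=
  of fun p q => |⟪x p - x q, v⟫|

lemma centering_mul_KMat_mul_centering {d n : ℕ} (x : Fin n → EuclideanSpace ℝ (Fin d))
    (v : EuclideanSpace ℝ (Fin d)) :
    centering n * KMat (fun i => (x i).ofLp) v.ofLp * centering n =
      -(2⁻¹ : ℝ) • (centering n * absProjDiffMatrix x v * centering n) := by
  set a : Fin n → ℝ := fun i => |⟪x i, v⟫|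
  have hK : KMat (fun i => (x i).ofLp) v.ofLp =
      (2⁻¹ : ℝ) • (vecMulVec a 1 + vecMulVec 1 a - absProjDiffMatrix x v) := by
    ext p q
    simp [KMat, brownianK, absProjDiffMatrix, dotp_ofLp, inner_sub_left, a]
    ring
  rw [hK, Matrix.mul_smul, Matrix.smul_mul, Matrix.mul_sub, Matrix.sub_mul, Matrix.mul_add,
    Matrix.add_mul, Matrix.mul_assoc _ (vecMulVec a 1), centering.vecMulVec_one_mul,
    centering.mul_vecMulVec_one]
  simp

lemma centering.mulVec_eq_self_of_mulVec_eq {n : ℕ} {B : Matrix (Fin n) (Fin n) ℝ} {μ : ℝ}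
    (hμ : μ ≠ 0) {z Y : Fin n → ℝ}
    (h : (centering n * B * centering n + μ • 1) *ᵥ z = centering n *ᵥ Y) :
    centering n *ᵥ z = z := by
  apply centering.mulVec_eq_self
  have h1 := congrArg (1 ⬝ᵥ ·) h
  simp only [dotProduct_mulVec, vecMul_add, ← vecMul_vecMul, centering.one_vecMul, zero_vecMul,
    zero_add, vecMul_smul, vecMul_one, smul_dotProduct, zero_dotProduct] at h1
  exact (smul_eq_zero.1 h1).resolve_left hμ

lemma hasFDerivAt_abs_inner {E : Type*} [NormedAddCommGroup E] [InnerProductSpace ℝ E] {u w : E}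
    (hu : ⟪u, w⟫ = 0 → u = 0) :
    HasFDerivAt (fun v => |⟪u, v⟫|) (Real.sign ⟪u, w⟫ • innerSL ℝ u) w := by
  rcases lt_trichotomy ⟪u, w⟫ 0 with hneg | hzero | hpos
  · simpa [Real.sign_of_neg hneg] using ((innerSL ℝ u).hasFDerivAt (x := w)).abs_of_neg hneg
  · simpa [hu hzero] using hasFDerivAt_const (0 : ℝ) w
  · simpa [Real.sign_of_pos hpos] using ((innerSL ℝ u).hasFDerivAt (x := w)).abs_of_pos hpos

lemma HasGradientAt.const_mul {F : Type*} [NormedAddCommGroup F] [InnerProductSpace ℝ F]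
    [CompleteSpace F] {f : F → ℝ} {g x : F} (h : HasGradientAt f g x) (c : ℝ) :
    HasGradientAt (fun y => c * f y) (c • g) x := by
  rw [hasGradientAt_iff_hasFDerivAt, map_smul]
  exact (hasGradientAt_iff_hasFDerivAt.1 h).const_mul c

section MatrixCalculus

-- Matrices carry no global norm; the `ℓ∞`-operator norm makes them a normed algebra, as
-- `hasFDerivAt_ringInverse` needs. All norms on this finite-dimensional space agree topologically.
attribute [local instance] Matrix.linftyOpNormedRing Matrix.linftyOpNormedAlgebra

variable {ι E : Type*} [Fintype ι] [DecidableEq ι] [NormedAddCommGroup E]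

lemma hasFDerivAt_matrix_of [NormedSpace ℝ E] {f : E → ι → ι → ℝ} {f' : ι → ι → E →L[ℝ] ℝ}
    {w : E} (hf : ∀ p q, HasFDerivAt (fun v => f v p q) (f' p q) w) :
    ∃ F' : E →L[ℝ] Matrix ι ι ℝ, HasFDerivAt (fun v => of (f v)) F' w ∧
      ∀ h, F' h = of fun p q => f' p q h := by
  refine ⟨∑ p, ∑ q, (f' p q).smulRight (single p q 1), ?_, fun h => ?_⟩
  · have hsum : (fun v => of (f v)) = fun v => ∑ p, ∑ q, f v p q • single p q (1 : ℝ) := by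
      funext v
      conv_lhs => rw [matrix_eq_sum_single (of (f v))]
      simp [smul_single]
    rw [hsum]
    exact HasFDerivAt.fun_sum fun p _ => HasFDerivAt.fun_sum fun q _ => (hf p q).smul_const _
  · conv_rhs => rw [matrix_eq_sum_single (of fun p q => f' p q h)]
    simp [smul_single]

lemma hasFDerivAt_dotProduct_inv_mulVec [NormedSpace ℝ E] {M : E → Matrix ι ι ℝ}
    {M' : E →L[ℝ] Matrix ι ι ℝ} {w : E} (hM : HasFDerivAt M M' w) (hMw : (M w).IsHermitian)
    (hunit : IsUnit (M w))
    (y : ι → ℝ) (L : E →L[ℝ] ℝ)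
    (hL : ∀ h, L h = -((M w)⁻¹ *ᵥ y ⬝ᵥ M' h *ᵥ (M w)⁻¹ *ᵥ y)) :
    HasFDerivAt (fun v => y ⬝ᵥ (M v)⁻¹ *ᵥ y) L w := by
  let Q : Matrix ι ι ℝ →L[ℝ] ℝ := LinearMap.toContinuousLinearMap
    { toFun := fun N => y ⬝ᵥ N *ᵥ y
      map_add' := fun _ _ => by simp [add_mulVec, dotProduct_add]
      map_smul' := fun _ _ => by simp [smul_mulVec] }
  have hinv := (hasFDerivAt_ringInverse (𝕜 := ℝ) hunit.unit).comp w hM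
  rw [← Ring.inverse_unit, IsUnit.unit_spec, ← nonsing_inv_eq_ringInverse] at hinv
  have hQ : (fun v => y ⬝ᵥ (M v)⁻¹ *ᵥ y) = Q ∘ Ring.inverse ∘ M := by
    funext v
    simp [Q, nonsing_inv_eq_ringInverse]
  have hsymm : y ᵥ* (M w)⁻¹ = (M w)⁻¹ *ᵥ y := by
    rw [← mulVec_transpose, transpose_nonsing_inv, ← conjTranspose_eq_transpose_of_trivial, hMw.eq]
  rw [hQ]
  refine (Q.hasFDerivAt.comp w hinv).congr_fderiv (ContinuousLinearMap.ext fun h => ?_)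
  change y ⬝ᵥ (-((M w)⁻¹ * M' h * (M w)⁻¹)) *ᵥ y = L h
  rw [hL, neg_mulVec, dotProduct_neg, ← mulVec_mulVec, ← mulVec_mulVec, dotProduct_mulVec, hsymm]

lemma hasFDerivAt_absProjDiffMatrix [InnerProductSpace ℝ E] {x : ι → E} {w : E}
    (hx : ∀ p q, x p ≠ x q → ⟪x p - x q, w⟫ ≠ 0) :
    ∃ A' : E →L[ℝ] Matrix ι ι ℝ, HasFDerivAt (absProjDiffMatrix x) A' w ∧
      ∀ h, A' h = of fun p q => Real.sign ⟪x p - x q, w⟫ * ⟪x p - x q, h⟫ := by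
  obtain ⟨A', hA', hA'_apply⟩ := hasFDerivAt_matrix_of (f := fun v p q => |⟪x p - x q, v⟫|)
    fun p q => hasFDerivAt_abs_inner fun h => sub_eq_zero.2 (not_imp_not.1 (hx p q) h)
  exact ⟨A', hA', fun h => by simp [hA'_apply, inner_sub_left]⟩

theorem hasGradientAt_dotProduct_inv_mulVec_centering {d n : ℕ}
    {x : Fin n → EuclideanSpace ℝ (Fin d)} {w : EuclideanSpace ℝ (Fin d)}
    (hx : ∀ p q, x p ≠ x q → ⟪x p - x q, w⟫ ≠ 0) {R : Matrix (Fin n) (Fin n) ℝ}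
    (hR : R.PosSemidef) {c μ : ℝ} (hc : 0 ≤ c) (hμ : 0 < μ) (Y : Fin n → ℝ)
    {M : EuclideanSpace ℝ (Fin d) → Matrix (Fin n) (Fin n) ℝ}
    (hM : ∀ v, M v =
      centering n * (c • (KMat (fun i => (x i).ofLp) v.ofLp + R)) * centering n + μ • 1)
    {z : Fin n → ℝ} (hz : z = (M w)⁻¹ *ᵥ (centering n *ᵥ Y)) :
    HasGradientAt (fun v => centering n *ᵥ Y ⬝ᵥ (M v)⁻¹ *ᵥ (centering n *ᵥ Y))
      ((c / 2) • ∑ p, ∑ q, (z p * z q * Real.sign ⟪x p - x q, w⟫) • (x p - x q)) w := by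
  set P := centering n
  obtain ⟨A', hA', hA'_apply⟩ := hasFDerivAt_absProjDiffMatrix hx
  have hM_eq :
      M = fun v => c • (P * R * P) + μ • 1 - (c / 2) • (P * absProjDiffMatrix x v * P) := by
    funext v
    rw [hM, smul_add, Matrix.mul_add, Matrix.add_mul, Matrix.mul_smul, Matrix.smul_mul,
      centering_mul_KMat_mul_centering, Matrix.mul_smul, Matrix.smul_mul]
    module
  have hM' : HasFDerivAt M (-(c / 2) • (ContinuousLinearMap.mulLeftRight ℝ _ P P).comp A') w := by
    rw [hM_eq, neg_smul]
    exact (((ContinuousLinearMap.mulLeftRight ℝ _ P P).hasFDerivAt.comp w hA').const_smul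
      (c / 2)).const_sub _
  have hpos : (M w).PosDef := by
    rw [hM]
    have := (((KMat_posSemidef (fun i => (x i).ofLp) w.ofLp).add hR).smul hc
      ).mul_mul_conjTranspose_same P
    rw [conjTranspose_eq_transpose_of_trivial, centering.transpose] at this
    exact PosDef.posSemidef_add this (PosDef.one.smul hμ)
  have hPz : P *ᵥ z = z := by
    refine centering.mulVec_eq_self_of_mulVec_eq
      (B := c • (KMat (fun i => (x i).ofLp) w.ofLp + R)) hμ.ne' (Y := Y) ?_
    rw [← hM, hz, mulVec_mulVec, mul_nonsing_inv _ ((isUnit_iff_isUnit_det _).1 hpos.isUnit),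
      one_mulVec]
  rw [hasGradientAt_iff_hasFDerivAt]
  refine hasFDerivAt_dotProduct_inv_mulVec hM' hpos.isHermitian hpos.isUnit _ _ fun h => ?_
  rw [← hz]
  change _ = -(z ⬝ᵥ (-(c / 2) • (P * A' h * P)) *ᵥ z)
  rw [smul_mulVec, dotProduct_smul, ← mulVec_mulVec, ← mulVec_mulVec, dotProduct_mulVec,
    ← mulVec_transpose, centering.transpose, hPz, hA'_apply]
  simp only [InnerProductSpace.toDual_apply_apply, inner_smul_left, sum_inner, dotProduct, mulVec,
    of_apply, Finset.mul_sum, smul_eq_mul, conj_trivial, ← Finset.sum_neg_distrib]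
  exact Finset.sum_congr rfl fun p _ => Finset.sum_congr rfl fun q _ => by ring

end MatrixCalculus

open Matrix in
theorem gradient_of_G_general (d n m : ℕ) (hn : 1 ≤ n)
    (x : Fin n → EuclideanSpace ℝ (Fin d)) (Y : Fin n → ℝ) (lam : ℝ) (hlam : 0 < lam)
    (w : Fin m → EuclideanSpace ℝ (Fin d)) (j : Fin m)
    (hdiff : ∀ i i' : Fin n, x i ≠ x i' → (∑ a, w j a * (x i a - x i' a)) ≠ 0) :
    let ones : Fin n → ℝ := fun _ => 1
    let P : Matrix (Fin n) (Fin n) ℝ := 1 - (n : ℝ)⁻¹ • Matrix.vecMulVec ones ones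
    let Yt : Fin n → ℝ := P.mulVec Y
    let G : EuclideanSpace ℝ (Fin d) → ℝ := fun v =>
      lam / 2 *
        (Yt ⬝ᵥ (P * ((m : ℝ)⁻¹ •
              ∑ j', KMat (fun i => (x i : Fin d → ℝ)) (Function.update w j v j')) * P +
            (lam * (n : ℝ)) • (1 : Matrix (Fin n) (Fin n) ℝ))⁻¹.mulVec Yt)
    let z : Fin n → ℝ :=
      (P * ((m : ℝ)⁻¹ • ∑ j', KMat (fun i => (x i : Fin d → ℝ)) (w j')) * P +
        ((n : ℝ) * lam) • (1 : Matrix (Fin n) (Fin n) ℝ))⁻¹.mulVec Yt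
    HasGradientAt G
      ((lam / (4 * (m : ℝ))) •
        ∑ i, ∑ i',
          (z i * z i' * Real.sign (∑ a, w j a * (x i a - x i' a))) • (x i - x i'))
      (w j) := by
  intro ones P Yt G z
  simp_rw [sum_mul_sub_eq_inner] at hdiff ⊢
  set K := fun v : EuclideanSpace ℝ (Fin d) => KMat (fun i => (x i).ofLp) v.ofLp
  set R := ∑ j' ∈ Finset.univ.erase j, K (w j')
  have hsplit (v : EuclideanSpace ℝ (Fin d)) : ∑ j', K (Function.update w j v j') = K v + R := by
    rw [← Finset.add_sum_erase _ _ (Finset.mem_univ j), Function.update_self]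
    exact congrArg _ (Finset.sum_congr rfl fun j' hj' => by
      rw [Function.update_of_ne (Finset.ne_of_mem_erase hj')])
  have hgrad := hasGradientAt_dotProduct_inv_mulVec_centering hdiff
    (R := R) (posSemidef_sum _ fun j' _ => KMat_posSemidef _ _) (inv_nonneg.2 m.cast_nonneg)
    (by positivity : 0 < lam * n) Y
    (M := fun v => P * ((m : ℝ)⁻¹ • ∑ j', K (Function.update w j v j')) * P + (lam * n) • 1)
    (fun v => by rw [hsplit]; rfl) (z := z) (by
      simp only [z, Function.update_eq_self, mul_comm (n : ℝ) lam]; rfl)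
  have hG := hgrad.const_mul (lam / 2)
  rwa [smul_smul, show lam / 2 * ((m : ℝ)⁻¹ / 2) = lam / (4 * m) by ring] at hG

open Matrix in
/-- Lemma (Gradient of `G`): with all other particles fixed, and assuming
`w_jᵀ(x_i − x_{i'}) ≠ 0` whenever `x_i ≠ x_{i'}`, the map `w_j ↦ G(W)` is differentiable
at `w_j` with the stated gradient. -/
theorem gradient_of_G (d n m : ℕ) (hn : 1 ≤ n) (hm : 1 ≤ m)
    (x : Fin n → EuclideanSpace ℝ (Fin d)) (Y : Fin n → ℝ) (lam : ℝ) (hlam : 0 < lam)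
    (w : Fin m → EuclideanSpace ℝ (Fin d)) (j : Fin m)
    (hdiff : ∀ i i' : Fin n, x i ≠ x i' → (∑ a, w j a * (x i a - x i' a)) ≠ 0) :
    let ones : Fin n → ℝ := fun _ => 1
    let P : Matrix (Fin n) (Fin n) ℝ := 1 - (n : ℝ)⁻¹ • Matrix.vecMulVec ones ones
    let Yt : Fin n → ℝ := P.mulVec Y
    let G : EuclideanSpace ℝ (Fin d) → ℝ := fun v =>
      lam / 2 *
        (Yt ⬝ᵥ (P * ((m : ℝ)⁻¹ •
              ∑ j', KMat (fun i => (x i : Fin d → ℝ)) (Function.update w j v j')) * P +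
            (lam * (n : ℝ)) • (1 : Matrix (Fin n) (Fin n) ℝ))⁻¹.mulVec Yt)
    let z : Fin n → ℝ :=
      (P * ((m : ℝ)⁻¹ • ∑ j', KMat (fun i => (x i : Fin d → ℝ)) (w j')) * P +
        ((n : ℝ) * lam) • (1 : Matrix (Fin n) (Fin n) ℝ))⁻¹.mulVec Yt
    HasGradientAt G
      ((lam / (4 * (m : ℝ))) •
        ∑ i, ∑ i',
          (z i * z i' * Real.sign (∑ a, w j a * (x i a - x i' a))) • (x i - x i'))
      (w j) :=
  gradient_of_G_general d n m hn x Y lam hlam w j hdiff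
end
end

section
/- Let n ≥ 1, M ≥ 1, T > 0, and let K_1,…,K_M ∈ ℝ^{n×n} be symmetric positive semidefinite matrices with trace(K_j) ≤ T for every j ∈ [M]. If ε ∈ ℝ^n is a standard Gaussian vector (centred with identity covariance), then E[ max_{j∈[M]} √(εᵀ K_j ε) ] ≤ √T · √(4 log M + 2). -/
/-!
Put `t = 1 / (4T)`. In an orthonormal eigenbasis of `K_j` the quadratic form becomes
`∑ λᵢ gᵢ²`, and by rotation invariance of the standard Gaussian the `gᵢ` are again independent
standard Gaussians, so `E[exp (t εᵀ K_j ε)] = ∏ (1 - 2tλᵢ)^(-1/2) ≤ exp (2t tr K_j) ≤ e^(1/2)`,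
using `tλᵢ ≤ 1/4`. Jensen's inequality for `exp` bounds `E[max_j εᵀ K_j ε]` by
`log (M e^(1/2)) / t = T (4 log M + 2)`, and Jensen's inequality for `√` finishes the proof.
-/

open MeasureTheory ProbabilityTheory Real

noncomputable section

open Matrix

lemma gaussianPDFReal_zero_one_mul_exp_mul_sq (c x : ℝ) :
    gaussianPDFReal 0 1 x * exp (c * x ^ 2) = (√(2 * π))⁻¹ * exp (-(1 / 2 - c) * x ^ 2) := by
  simp only [gaussianPDFReal, NNReal.coe_one, mul_one, sub_zero, mul_assoc, ← exp_add]
  ring_nf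

lemma integrable_exp_mul_sq_gaussianReal {c : ℝ} (hc : c < 1 / 2) :
    Integrable (fun x => exp (c * x ^ 2)) (gaussianReal 0 1) := by
  rw [gaussianReal_of_var_ne_zero 0 one_ne_zero,
    integrable_withDensity_iff_integrable_smul' (measurable_gaussianPDF 0 1)
      (ae_of_all _ fun _ => gaussianPDF_lt_top)]
  simp_rw [toReal_gaussianPDF, smul_eq_mul, gaussianPDFReal_zero_one_mul_exp_mul_sq]
  exact (integrable_exp_neg_mul_sq (by linarith)).const_mul _

lemma integral_exp_mul_sq_gaussianReal {c : ℝ} (hc : c < 1 / 2) :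
    ∫ x, exp (c * x ^ 2) ∂gaussianReal 0 1 = (√(1 - 2 * c))⁻¹ := by
  simp_rw [integral_gaussianReal_eq_integral_smul one_ne_zero, smul_eq_mul,
    gaussianPDFReal_zero_one_mul_exp_mul_sq, integral_const_mul, integral_gaussian]
  rw [← sqrt_inv, ← sqrt_inv, ← sqrt_mul (by positivity)]
  have : 1 / 2 - c ≠ 0 := by linarith
  have : 1 - 2 * c ≠ 0 := by linarith
  congr 1
  field_simp

lemma inv_sqrt_one_sub_two_mul_le_exp {c : ℝ} (hc₀ : 0 ≤ c) (hc : 4 * c ≤ 1) :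
    (√(1 - 2 * c))⁻¹ ≤ exp (2 * c) := by
  have hpos : 0 < 1 - 2 * c := by linarith
  have hexp : exp (2 * c) = √(exp (4 * c)) := by rw [← exp_half]; ring_nf
  rw [inv_le_iff_one_le_mul₀' (sqrt_pos.2 hpos), hexp, ← sqrt_mul hpos.le, one_le_sqrt]
  -- `(1 - 2c) e^(4c) ≥ (1 - 2c) (1 + 4c) = 1 + 2c (1 - 4c) ≥ 1`
  nlinarith [add_one_le_exp (4 * c)]

lemma pi_gaussianReal_eq_map_orthonormalBasis {ι : Type*} [Fintype ι]
    (b : OrthonormalBasis ι ℝ (EuclideanSpace ℝ ι)) :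
    Measure.pi (fun _ : ι => gaussianReal 0 1) =
      (Measure.pi fun _ : ι => gaussianReal 0 1).map (fun x => WithLp.ofLp (∑ i, x i • b i)) := by
  have h := congrArg (Measure.map WithLp.ofLp) (map_pi_eq_stdGaussian (ι := ι))
  rw [stdGaussian_eq_map_pi_orthonormalBasis b, Measure.map_map (by fun_prop) (by fun_prop),
    Measure.map_map (by fun_prop) (by fun_prop)] at h
  simpa [Function.comp_def] using h

namespace Matrix.IsHermitian

variable {ι : Type*} [Fintype ι] [DecidableEq ι] {K : Matrix ι ι ℝ}

lemma dotProduct_mulVec_ofLp_sum_eigenvectorBasis (hK : K.IsHermitian) (x : ι → ℝ) :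
    WithLp.ofLp (∑ i, x i • hK.eigenvectorBasis i) ⬝ᵥ
        K *ᵥ WithLp.ofLp (∑ i, x i • hK.eigenvectorBasis i) =
      ∑ i, hK.eigenvalues i * x i ^ 2 := by
  have hb (i j : ι) : (hK.eigenvectorBasis i : ι → ℝ) ⬝ᵥ hK.eigenvectorBasis j =
      if i = j then 1 else 0 := by
    rw [← orthonormal_iff_ite.1 hK.eigenvectorBasis.orthonormal i j,
      EuclideanSpace.inner_eq_star_dotProduct, dotProduct_comm]
    simp
  simp only [WithLp.ofLp_sum, WithLp.ofLp_smul, mulVec_sum, mulVec_smul,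
    hK.mulVec_eigenvectorBasis, sum_dotProduct, dotProduct_sum, smul_dotProduct,
    dotProduct_smul, hb, smul_eq_mul, mul_ite, mul_one, mul_zero, Finset.sum_ite_eq',
    Finset.mem_univ, if_true]
  exact Finset.sum_congr rfl fun i _ => by ring

lemma integrable_exp_mul_dotProduct_mulVec (hK : K.IsHermitian) {t : ℝ}
    (ht : ∀ i, t * hK.eigenvalues i < 1 / 2) :
    Integrable (fun ε : ι → ℝ => Real.exp (t * (ε ⬝ᵥ K *ᵥ ε)))
      (Measure.pi fun _ : ι => gaussianReal 0 1) := by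
  rw [pi_gaussianReal_eq_map_orthonormalBasis hK.eigenvectorBasis,
    integrable_map_measure (by fun_prop) (by fun_prop : Continuous _).aemeasurable]
  simp_rw [Function.comp_def, hK.dotProduct_mulVec_ofLp_sum_eigenvectorBasis, Finset.mul_sum,
    exp_sum, ← mul_assoc]
  exact Integrable.fintype_prod (f := fun i y => Real.exp (t * hK.eigenvalues i * y ^ 2))
    fun i => integrable_exp_mul_sq_gaussianReal (ht i)

lemma integral_exp_mul_dotProduct_mulVec (hK : K.IsHermitian) {t : ℝ}
    (ht : ∀ i, t * hK.eigenvalues i < 1 / 2) :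
    ∫ ε : ι → ℝ, Real.exp (t * (ε ⬝ᵥ K *ᵥ ε)) ∂(Measure.pi fun _ : ι => gaussianReal 0 1) =
      ∏ i, (√(1 - 2 * t * hK.eigenvalues i))⁻¹ := by
  rw [pi_gaussianReal_eq_map_orthonormalBasis hK.eigenvectorBasis,
    integral_map (by fun_prop : Continuous _).aemeasurable (by fun_prop)]
  simp_rw [hK.dotProduct_mulVec_ofLp_sum_eigenvectorBasis, Finset.mul_sum, exp_sum, ← mul_assoc]
  rw [integral_fintype_prod_eq_prod (fun i y => Real.exp (t * hK.eigenvalues i * y ^ 2))]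
  refine Finset.prod_congr rfl fun i _ => ?_
  rw [mul_assoc 2]
  exact integral_exp_mul_sq_gaussianReal (ht i)

end Matrix.IsHermitian

namespace Matrix.PosSemidef

variable {ι : Type*} [Fintype ι] [DecidableEq ι] {K : Matrix ι ι ℝ} {t : ℝ}

lemma eigenvalues_le_trace (hK : K.PosSemidef) (i : ι) :
    hK.isHermitian.eigenvalues i ≤ K.trace := by
  rw [hK.isHermitian.trace_eq_sum_eigenvalues]
  exact Finset.single_le_sum (fun j _ => hK.eigenvalues_nonneg j) (Finset.mem_univ i)

lemma four_mul_mul_eigenvalues_le_one (hK : K.PosSemidef) (ht₀ : 0 ≤ t)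
    (ht : 4 * t * K.trace ≤ 1) (i : ι) : 4 * (t * hK.isHermitian.eigenvalues i) ≤ 1 := by
  nlinarith [mul_le_mul_of_nonneg_left (hK.eigenvalues_le_trace i) ht₀]

lemma integrable_exp_mul_dotProduct_mulVec (hK : K.PosSemidef) (ht₀ : 0 ≤ t)
    (ht : 4 * t * K.trace ≤ 1) :
    Integrable (fun ε : ι → ℝ => exp (t * (ε ⬝ᵥ K *ᵥ ε)))
      (Measure.pi fun _ : ι => gaussianReal 0 1) :=
  hK.isHermitian.integrable_exp_mul_dotProduct_mulVec fun i => by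
    linarith [hK.four_mul_mul_eigenvalues_le_one ht₀ ht i]

lemma integral_exp_mul_dotProduct_mulVec_le (hK : K.PosSemidef) (ht₀ : 0 ≤ t)
    (ht : 4 * t * K.trace ≤ 1) :
    ∫ ε : ι → ℝ, exp (t * (ε ⬝ᵥ K *ᵥ ε)) ∂(Measure.pi fun _ : ι => gaussianReal 0 1) ≤
      exp (2 * t * K.trace) := by
  have hle := hK.four_mul_mul_eigenvalues_le_one ht₀ ht
  rw [hK.isHermitian.integral_exp_mul_dotProduct_mulVec fun i => by linarith [hle i],
    hK.isHermitian.trace_eq_sum_eigenvalues]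
  simp only [RCLike.ofReal_real_eq_id, id_eq, Finset.mul_sum, exp_sum]
  refine Finset.prod_le_prod (fun i _ => inv_nonneg.2 (sqrt_nonneg _)) fun i _ => ?_
  simpa only [mul_assoc] using
    inv_sqrt_one_sub_two_mul_le_exp (mul_nonneg ht₀ (hK.eigenvalues_nonneg i)) (hle i)

end Matrix.PosSemidef

section Expectation

variable {Ω : Type*} [MeasurableSpace Ω] {μ : Measure Ω}

theorem integrable_of_integrable_exp_mul_of_nonneg {X : Ω → ℝ} {t : ℝ} (ht : 0 < t)
    (hX₀ : ∀ ω, 0 ≤ X ω) (hX : AEStronglyMeasurable X μ)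
    (hexp : Integrable (fun ω => exp (t * X ω)) μ) : Integrable X μ :=
  (hexp.div_const t).mono' hX (ae_of_all _ fun ω => by
    rw [norm_of_nonneg (hX₀ ω), le_div_iff₀ ht, mul_comm]
    linarith [add_one_le_exp (t * X ω)])

theorem integrable_iSup_of_fintype {ι : Type*} [Fintype ι] [Nonempty ι] {X : ι → Ω → ℝ}
    (hX : ∀ j, Integrable (X j) μ) : Integrable (fun ω => ⨆ j, X j ω) μ := by
  refine (integrable_finsetSum Finset.univ fun j _ => (hX j).abs).mono'
    (AEMeasurable.iSup fun j => (hX j).aemeasurable).aestronglyMeasurable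
    (ae_of_all _ fun ω => ?_)
  obtain ⟨j, hj⟩ : ∃ j, X j ω = ⨆ j, X j ω := exists_eq_ciSup_of_finite
  rw [← hj, norm_eq_abs]
  exact Finset.single_le_sum (f := fun j => |X j ω|) (fun j _ => abs_nonneg _)
    (Finset.mem_univ j)

variable [IsProbabilityMeasure μ]

theorem integral_iSup_le_of_integral_exp_le {ι : Type*} [Fintype ι] [Nonempty ι]
    {X : ι → Ω → ℝ} {t B : ℝ} (ht : 0 < t) (hX : ∀ j, Integrable (X j) μ)
    (hexp : ∀ j, Integrable (fun ω => exp (t * X j ω)) μ)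
    (hB : ∀ j, ∫ ω, exp (t * X j ω) ∂μ ≤ B) :
    ∫ ω, ⨆ j, X j ω ∂μ ≤ log (Fintype.card ι * B) / t := by
  have hsup (ω : Ω) : ∃ j, X j ω = ⨆ j, X j ω := exists_eq_ciSup_of_finite
  have hsup_int := integrable_iSup_of_fintype hX
  have hsum_int : Integrable (fun ω => ∑ j, exp (t * X j ω)) μ :=
    integrable_finsetSum _ fun j _ => hexp j
  have hexp_sup_le (ω : Ω) : exp (t * ⨆ j, X j ω) ≤ ∑ j, exp (t * X j ω) := by
    obtain ⟨j, hj⟩ := hsup ω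
    rw [← hj]
    exact Finset.single_le_sum (f := fun j => exp (t * X j ω)) (fun j _ => (exp_pos _).le)
      (Finset.mem_univ j)
  have hexp_sup_int : Integrable (fun ω => exp (t * ⨆ j, X j ω)) μ :=
    hsum_int.mono' (continuous_exp.comp_aestronglyMeasurable
      (hsup_int.aestronglyMeasurable.const_mul t))
      (ae_of_all _ fun ω => (norm_of_nonneg (exp_pos _).le).trans_le (hexp_sup_le ω))
  have hjensen : exp (t * ∫ ω, ⨆ j, X j ω ∂μ) ≤ Fintype.card ι * B := calc
    exp (t * ∫ ω, ⨆ j, X j ω ∂μ) = exp (∫ ω, t * ⨆ j, X j ω ∂μ) := by rw [integral_const_mul]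
    _ ≤ ∫ ω, exp (t * ⨆ j, X j ω) ∂μ :=
      convexOn_exp.map_integral_le continuous_exp.continuousOn isClosed_univ
        (ae_of_all _ fun _ => Set.mem_univ _) (hsup_int.const_mul t) hexp_sup_int
    _ ≤ ∫ ω, ∑ j, exp (t * X j ω) ∂μ := integral_mono hexp_sup_int hsum_int hexp_sup_le
    _ = ∑ j, ∫ ω, exp (t * X j ω) ∂μ := integral_finsetSum _ fun j _ => hexp j
    _ ≤ ∑ _j : ι, B := Finset.sum_le_sum fun j _ => hB j
    _ = Fintype.card ι * B := by simp
  rw [le_div_iff₀ ht, mul_comm]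
  exact (le_log_iff_exp_le ((exp_pos _).trans_le hjensen)).2 hjensen

theorem integral_sqrt_le_sqrt_integral {f : Ω → ℝ} (hf₀ : 0 ≤ᵐ[μ] f) (hf : Integrable f μ) :
    ∫ ω, √(f ω) ∂μ ≤ √(∫ ω, f ω ∂μ) := by
  have hsqrt_int : Integrable (fun ω => √(f ω)) μ :=
    (hf.add (integrable_const 1)).mono' hf.aemeasurable.sqrt.aestronglyMeasurable
      (hf₀.mono fun ω hω => by
        rw [Pi.add_apply, norm_of_nonneg (sqrt_nonneg _)]
        nlinarith [sq_sqrt hω, sqrt_nonneg (f ω)])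
  exact strictConcaveOn_sqrt.concaveOn.le_map_integral continuous_sqrt.continuousOn isClosed_Ici
    hf₀ hf hsqrt_int

end Expectation

open Matrix in
theorem gaussian_max_quadform_general (n M : ℕ) (hM : 1 ≤ M) (T : ℝ) (hT : 0 < T)
    (K : Fin M → Matrix (Fin n) (Fin n) ℝ) (hK : ∀ j, (K j).PosSemidef)
    (htr : ∀ j, (K j).trace ≤ T) :
    (∫ ε : Fin n → ℝ, (⨆ j, Real.sqrt (ε ⬝ᵥ (K j).mulVec ε)) ∂(stdGaussianPi n)) ≤
      Real.sqrt T * Real.sqrt (4 * Real.log M + 2) := by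
  let j₀ : Fin M := ⟨0, hM⟩
  have : Nonempty (Fin M) := ⟨j₀⟩
  have : IsProbabilityMeasure (stdGaussianPi n) := by unfold stdGaussianPi; infer_instance
  have ht : 0 < (4 * T)⁻¹ := by positivity
  have ht_trace (j : Fin M) : 4 * (4 * T)⁻¹ * (K j).trace ≤ 1 := by
    rw [mul_inv, ← mul_assoc, mul_inv_cancel₀ four_ne_zero, one_mul, inv_mul_le_one₀ hT]
    exact htr j
  have hexp (j : Fin M) := (hK j).integrable_exp_mul_dotProduct_mulVec ht.le (ht_trace j)
  have hQ_int (j : Fin M) : Integrable (fun ε => ε ⬝ᵥ K j *ᵥ ε) (stdGaussianPi n) :=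
    integrable_of_integrable_exp_mul_of_nonneg ht (hK j).dotProduct_mulVec_nonneg
      (by fun_prop) (hexp j)
  have hmax : ∫ ε, ⨆ j, ε ⬝ᵥ K j *ᵥ ε ∂stdGaussianPi n ≤ T * (4 * log M + 2) := by
    refine (integral_iSup_le_of_integral_exp_le ht hQ_int hexp (B := exp (1 / 2)) fun j =>
      ((hK j).integral_exp_mul_dotProduct_mulVec_le ht.le (ht_trace j)).trans
        (exp_le_exp.2 ?_)).trans_eq ?_
    · linarith [ht_trace j]
    · rw [Fintype.card_fin, log_mul (by positivity) (exp_pos _).ne', log_exp]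
      field_simp
      ring
  calc ∫ ε, ⨆ j, √(ε ⬝ᵥ K j *ᵥ ε) ∂stdGaussianPi n
      = ∫ ε, √(⨆ j, ε ⬝ᵥ K j *ᵥ ε) ∂stdGaussianPi n :=
        integral_congr_ae (ae_of_all _ fun ε => (Monotone.map_ciSup_of_continuousAt
          continuous_sqrt.continuousAt sqrt_monotone (Set.finite_range _).bddAbove).symm)
    _ ≤ √(∫ ε, ⨆ j, ε ⬝ᵥ K j *ᵥ ε ∂stdGaussianPi n) :=
      integral_sqrt_le_sqrt_integral (ae_of_all _ fun ε => le_ciSup_of_le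
        (Set.finite_range _).bddAbove j₀ ((hK j₀).dotProduct_mulVec_nonneg ε))
        (integrable_iSup_of_fintype hQ_int)
    _ ≤ √(T * (4 * log M + 2)) := sqrt_le_sqrt hmax
    _ = √T * √(4 * log M + 2) := sqrt_mul hT.le _

open Matrix in
/-- Finite-maximum bound for Gaussian quadratic forms: if `ε` is a standard Gaussian
vector and the `K_j` are symmetric positive semidefinite with trace at most `T`, then
`E[max_j √(εᵀ K_j ε)] ≤ √T √(4 log M + 2)`. -/
theorem gaussian_max_quadform (n M : ℕ) (hn : 1 ≤ n) (hM : 1 ≤ M) (T : ℝ) (hT : 0 < T)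
    (K : Fin M → Matrix (Fin n) (Fin n) ℝ) (hK : ∀ j, (K j).PosSemidef)
    (htr : ∀ j, (K j).trace ≤ T) :
    (∫ ε : Fin n → ℝ, (⨆ j, Real.sqrt (ε ⬝ᵥ (K j).mulVec ε)) ∂(stdGaussianPi n)) ≤
      Real.sqrt T * Real.sqrt (4 * Real.log M + 2) :=
  gaussian_max_quadform_general n M hM T hT K hK htr

end
end
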